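/- For every permutation σ of [n], cros(σ) = cros(θ̂(σ)) and nest(σ) = ñest(θ̂(σ)), where ñest(σ) := ẽne(σ) + une(σ) + lne(σ). -/

import Mathlib

namespace Paper

variable {n : ℕ}

/-- The 1-based position corresponding to `i : Fin n`. -/
def pv (i : Fin n) : ℕ := (i : ℕ) + 1

/-- The 1-based letter of the word `f` at 1-based position `k` (0 if out of range). -/
def valAt (f : Fin n → Fin n) (k : ℕ) : ℕ :=
  if h : 1 ≤ k ∧ k ≤ n then ((f ⟨k - 1, by omega⟩ : Fin n) : ℕ) + 1 else 0

/-- The map θ̂ : the 1-based `i`-th letter of `hatTheta f` is `σ̂_{n+1-i}`,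
where `σ̂ₐ = n - a` (1-based) if `a < n` and `n̂ = n`. (0-based encoding.) -/
def hatTheta (f : Fin n → Fin n) (i : Fin n) : Fin n :=
  if ((f i.rev : ℕ)) = n - 1 then f i.rev
  else ⟨n - 2 - (f i.rev : ℕ), by have := i.isLt; omega⟩

end Paper

namespace Paper

variable {n : ℕ}

/-- Ending-crossings: pairs (i,j) with i < j ≤ σᵢ < σⱼ = n (1-based). -/
def ecr (f : Fin n → Fin n) : ℕ :=
  (Finset.univ.filter (fun p : Fin n × Fin n =>
    pv p.1 < pv p.2 ∧ pv p.2 ≤ valAt f (pv p.1) ∧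
    valAt f (pv p.1) < valAt f (pv p.2) ∧ valAt f (pv p.2) = n)).card

/-- Upper-crossings: pairs (i,j) with i < j ≤ σᵢ < σⱼ < n (1-based). -/
def ucr (f : Fin n → Fin n) : ℕ :=
  (Finset.univ.filter (fun p : Fin n × Fin n =>
    pv p.1 < pv p.2 ∧ pv p.2 ≤ valAt f (pv p.1) ∧
    valAt f (pv p.1) < valAt f (pv p.2) ∧ valAt f (pv p.2) < n)).card

/-- Lower-crossings: pairs (i,j) with i > j > σᵢ > σⱼ (1-based). -/
def lcr (f : Fin n → Fin n) : ℕ :=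
  (Finset.univ.filter (fun p : Fin n × Fin n =>
    pv p.1 > pv p.2 ∧ pv p.2 > valAt f (pv p.1) ∧
    valAt f (pv p.1) > valAt f (pv p.2))).card

/-- Ending-nestings: pairs (i,j) with i < j ≤ σⱼ < σᵢ = n (1-based). -/
def ene (f : Fin n → Fin n) : ℕ :=
  (Finset.univ.filter (fun p : Fin n × Fin n =>
    pv p.1 < pv p.2 ∧ pv p.2 ≤ valAt f (pv p.2) ∧
    valAt f (pv p.2) < valAt f (pv p.1) ∧ valAt f (pv p.1) = n)).card

/-- Upper-nestings: pairs (i,j) with i < j ≤ σⱼ < σᵢ < n (1-based). -/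
def une (f : Fin n → Fin n) : ℕ :=
  (Finset.univ.filter (fun p : Fin n × Fin n =>
    pv p.1 < pv p.2 ∧ pv p.2 ≤ valAt f (pv p.2) ∧
    valAt f (pv p.2) < valAt f (pv p.1) ∧ valAt f (pv p.1) < n)).card

/-- Lower-nestings: pairs (i,j) with i > j > σⱼ > σᵢ (1-based). -/
def lne (f : Fin n → Fin n) : ℕ :=
  (Finset.univ.filter (fun p : Fin n × Fin n =>
    pv p.1 > pv p.2 ∧ pv p.2 > valAt f (pv p.2) ∧
    valAt f (pv p.2) > valAt f (pv p.1))).card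

/-- Variant ending-nestings: pairs (i,j) with σⱼ < j < i ≤ σᵢ = n (1-based). -/
def etne (f : Fin n → Fin n) : ℕ :=
  (Finset.univ.filter (fun p : Fin n × Fin n =>
    valAt f (pv p.2) < pv p.2 ∧ pv p.2 < pv p.1 ∧
    pv p.1 ≤ valAt f (pv p.1) ∧ valAt f (pv p.1) = n)).card

/-- The crossing number: #{(i,j) : i < j ≤ σᵢ < σⱼ} + #{(i,j) : i > j > σᵢ > σⱼ}. -/
def cros (f : Fin n → Fin n) : ℕ :=
  (Finset.univ.filter (fun p : Fin n × Fin n =>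
    pv p.1 < pv p.2 ∧ pv p.2 ≤ valAt f (pv p.1) ∧
    valAt f (pv p.1) < valAt f (pv p.2))).card
  + lcr f

/-- The nesting number: #{(i,j) : i < j ≤ σⱼ < σᵢ} + #{(i,j) : i > j > σⱼ > σᵢ}. -/
def nest (f : Fin n → Fin n) : ℕ :=
  (Finset.univ.filter (fun p : Fin n × Fin n =>
    pv p.1 < pv p.2 ∧ pv p.2 ≤ valAt f (pv p.2) ∧
    valAt f (pv p.2) < valAt f (pv p.1))).card
  + lne f

end Paper


namespace Paper

variable {n : ℕ}

private lemma rev_val (i : Fin n) : (i.rev : ℕ) = n - 1 - (i : ℕ) := by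
  rw [Fin.val_rev]; omega

private lemma valAt_pv (f : Fin n → Fin n) (i : Fin n) : valAt f (pv i) = (f i : ℕ) + 1 := by
  have hi := i.isLt
  have h1 : (⟨(i : ℕ) + 1 - 1, by omega⟩ : Fin n) = i := by ext; simp
  simp only [valAt, pv]
  exact (dif_pos (⟨by omega, by omega⟩ : 1 ≤ (i : ℕ) + 1 ∧ (i : ℕ) + 1 ≤ n)).trans (by rw [h1])

private lemma valAt_le (f : Fin n → Fin n) (k : ℕ) : valAt f k ≤ n := by
  unfold valAt; split
  · exact Fin.isLt _
  · omega

private lemma hatTheta_val (f : Fin n → Fin n) (i : Fin n) :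
    (hatTheta f i : ℕ) = if (f i.rev : ℕ) = n - 1 then n - 1 else n - 2 - (f i.rev : ℕ) := by
  unfold hatTheta
  split_ifs with h
  · exact h
  · rfl

private lemma card_rev_swap {P Q : Fin n × Fin n → Prop} [DecidablePred P] [DecidablePred Q]
    (h1 : ∀ p : Fin n × Fin n, P p → Q (p.1.rev, p.2.rev))
    (h2 : ∀ p : Fin n × Fin n, Q p → P (p.1.rev, p.2.rev)) :
    (Finset.univ.filter P).card = (Finset.univ.filter Q).card := by
  apply Finset.card_nbij' (i := fun p : Fin n × Fin n => (p.1.rev, p.2.rev))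
      (j := fun p : Fin n × Fin n => (p.1.rev, p.2.rev))
  · intro p hp
    simp only [Finset.mem_coe, Finset.mem_filter, Finset.mem_univ, true_and] at hp ⊢
    exact h1 p hp
  · intro p hp
    simp only [Finset.mem_coe, Finset.mem_filter, Finset.mem_univ, true_and] at hp ⊢
    exact h2 p hp
  · intro p _; simp [Fin.rev_rev]
  · intro p _; simp [Fin.rev_rev]

private lemma ucr_lcr (f : Fin n → Fin n) : ucr f = lcr (hatTheta f) := by
  unfold ucr lcr
  apply card_rev_swap <;> intro p hp <;>
    have b1 := p.1.isLt <;> have b2 := p.2.isLt <;>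
    have c1 := (f p.1).isLt <;> have c2 := (f p.2).isLt <;>
    have d1 := (f p.1.rev).isLt <;> have d2 := (f p.2.rev).isLt <;>
    simp only [valAt_pv, hatTheta_val, Fin.rev_rev] at hp ⊢ <;>
    simp only [pv, rev_val] at hp ⊢ <;>
    split_ifs at hp ⊢ <;> omega

private lemma lcr_ucr (f : Fin n → Fin n) : lcr f = ucr (hatTheta f) := by
  unfold ucr lcr
  apply card_rev_swap <;> intro p hp <;>
    have b1 := p.1.isLt <;> have b2 := p.2.isLt <;>
    have c1 := (f p.1).isLt <;> have c2 := (f p.2).isLt <;>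
    have d1 := (f p.1.rev).isLt <;> have d2 := (f p.2.rev).isLt <;>
    simp only [valAt_pv, hatTheta_val, Fin.rev_rev] at hp ⊢ <;>
    simp only [pv, rev_val] at hp ⊢ <;>
    split_ifs at hp ⊢ <;> omega

private lemma une_lne (f : Fin n → Fin n) : une f = lne (hatTheta f) := by
  unfold une lne
  apply card_rev_swap <;> intro p hp <;>
    have b1 := p.1.isLt <;> have b2 := p.2.isLt <;>
    have c1 := (f p.1).isLt <;> have c2 := (f p.2).isLt <;>
    have d1 := (f p.1.rev).isLt <;> have d2 := (f p.2.rev).isLt <;>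
    simp only [valAt_pv, hatTheta_val, Fin.rev_rev] at hp ⊢ <;>
    simp only [pv, rev_val] at hp ⊢ <;>
    split_ifs at hp ⊢ <;> omega

private lemma lne_une (f : Fin n → Fin n) : lne f = une (hatTheta f) := by
  unfold une lne
  apply card_rev_swap <;> intro p hp <;>
    have b1 := p.1.isLt <;> have b2 := p.2.isLt <;>
    have c1 := (f p.1).isLt <;> have c2 := (f p.2).isLt <;>
    have d1 := (f p.1.rev).isLt <;> have d2 := (f p.2.rev).isLt <;>
    simp only [valAt_pv, hatTheta_val, Fin.rev_rev] at hp ⊢ <;>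
    simp only [pv, rev_val] at hp ⊢ <;>
    split_ifs at hp ⊢ <;> omega

private lemma ene_etne (f : Fin n → Fin n) : ene f = etne (hatTheta f) := by
  unfold ene etne
  apply card_rev_swap <;> intro p hp <;>
    have b1 := p.1.isLt <;> have b2 := p.2.isLt <;>
    have c1 := (f p.1).isLt <;> have c2 := (f p.2).isLt <;>
    have d1 := (f p.1.rev).isLt <;> have d2 := (f p.2.rev).isLt <;>
    simp only [valAt_pv, hatTheta_val, Fin.rev_rev] at hp ⊢ <;>
    simp only [pv, rev_val] at hp ⊢ <;>
    split_ifs at hp ⊢ <;> omega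

private lemma ecr_count (f : Fin n → Fin n) (hf : Function.Injective f) (P : Fin n)
    (hP : (f P : ℕ) + 1 = n) :
    ecr f = (Finset.univ.filter
      (fun i : Fin n => (i : ℕ) < (P : ℕ) ∧ (P : ℕ) ≤ (f i : ℕ))).card := by
  unfold ecr
  apply Finset.card_nbij' (i := fun p : Fin n × Fin n => p.1) (j := fun i => (i, P))
  · intro p hp
    simp only [Finset.mem_coe, Finset.mem_filter, Finset.mem_univ, true_and, valAt_pv] at hp ⊢
    simp only [pv] at hp ⊢
    have h2 : p.2 = P := hf (Fin.ext (by omega))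
    rw [h2] at hp
    omega
  · intro i hi
    simp only [Finset.mem_coe, Finset.mem_filter, Finset.mem_univ, true_and, valAt_pv] at hi ⊢
    simp only [pv] at hi ⊢
    have hne : (f i : ℕ) ≠ (f P : ℕ) := fun h => by
      have := congrArg Fin.val (hf (Fin.ext h)); omega
    have := (f i).isLt
    omega
  · intro p hp
    simp only [Finset.mem_coe, Finset.mem_filter, Finset.mem_univ, true_and, valAt_pv] at hp
    simp only [pv] at hp
    have h2 : p.2 = P := hf (Fin.ext (by omega))
    obtain ⟨a, b⟩ := p
    simp_all
  · intro i _; rfl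

private lemma hatTheta_injective {f : Fin n → Fin n} (hf : Function.Injective f) :
    Function.Injective (hatTheta f) := by
  intro a b h
  have h' := congrArg Fin.val h
  rw [hatTheta_val, hatTheta_val] at h'
  have ha := (f a.rev).isLt
  have hb := (f b.rev).isLt
  have hv : (f a.rev : ℕ) = (f b.rev : ℕ) := by split_ifs at h' <;> omega
  have := congrArg Fin.rev (hf (Fin.ext hv))
  simpa [Fin.rev_rev] using this

private lemma ecr_hatTheta (f : Fin n → Fin n) (hf : Function.Injective f) (P : Fin n)
    (hP : (f P : ℕ) + 1 = n) :
    ecr (hatTheta f) =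
      (Finset.univ.filter (fun i : Fin n => (P : ℕ) < (i : ℕ) ∧ (f i : ℕ) < (P : ℕ))).card := by
  have hn : 1 ≤ n := by have := (f P).isLt; omega
  have hPrev : (hatTheta f P.rev : ℕ) + 1 = n := by
    rw [hatTheta_val, Fin.rev_rev, if_pos (by omega)]; omega
  rw [ecr_count (hatTheta f) (hatTheta_injective hf) P.rev hPrev]
  have key : ∀ j : Fin n, (f j : ℕ) = n - 1 → j = P := fun j hj =>
    hf (Fin.ext (by omega))
  apply Finset.card_nbij' (i := fun i : Fin n => i.rev) (j := fun i : Fin n => i.rev)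
  · intro i hi
    simp only [Finset.mem_coe, Finset.mem_filter, Finset.mem_univ, true_and, hatTheta_val, Fin.rev_rev,
      rev_val] at hi ⊢
    have b1 := i.isLt; have b2 := P.isLt; have b3 := (f i.rev).isLt
    split_ifs at hi with h
    · have := congrArg Fin.val (key i.rev h)
      rw [rev_val] at this
      omega
    · omega
  · intro i hi
    simp only [Finset.mem_coe, Finset.mem_filter, Finset.mem_univ, true_and, hatTheta_val, Fin.rev_rev,
      rev_val] at hi ⊢
    have b1 := i.isLt; have b2 := P.isLt; have b3 := (f i).isLt
    split_ifs with h
    · omega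
    · omega
  · intro i _; simp [Fin.rev_rev]
  · intro i _; simp [Fin.rev_rev]

private lemma count_flip (σ : Equiv.Perm (Fin n)) (P : Fin n) (hP : (σ P : ℕ) + 1 = n) :
    (Finset.univ.filter (fun i : Fin n => (i : ℕ) < (P : ℕ) ∧ (P : ℕ) ≤ (σ i : ℕ))).card =
    (Finset.univ.filter (fun i : Fin n => (P : ℕ) < (i : ℕ) ∧ (σ i : ℕ) < (P : ℕ))).card := by
  have h1 : (Finset.univ.filter (fun i : Fin n => (i : ℕ) < (P : ℕ))).card =
      (Finset.univ.filter (fun i : Fin n => (σ i : ℕ) < (P : ℕ))).card := by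
    apply Finset.card_nbij' (i := fun i => σ.symm i) (j := fun i => σ i) <;>
      intro a ha <;> simp_all
  have h2 := Finset.card_filter_add_card_filter_not
    (s := (Finset.univ.filter (fun i : Fin n => (i : ℕ) < (P : ℕ))))
    (p := fun i : Fin n => (P : ℕ) ≤ (σ i : ℕ))
  have h3 := Finset.card_filter_add_card_filter_not
    (s := (Finset.univ.filter (fun i : Fin n => (σ i : ℕ) < (P : ℕ))))
    (p := fun i : Fin n => (P : ℕ) < (i : ℕ))
  simp only [Finset.filter_filter] at h2 h3
  have e1 : Finset.univ.filter (fun i : Fin n => (i : ℕ) < (P : ℕ) ∧ ¬ (P : ℕ) ≤ (σ i : ℕ)) =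
      Finset.univ.filter (fun i : Fin n => (σ i : ℕ) < (P : ℕ) ∧ ¬ (P : ℕ) < (i : ℕ)) := by
    ext i
    simp only [Finset.mem_filter, Finset.mem_univ, true_and, not_le, not_lt]
    have hb := P.isLt
    by_cases hc : (i : ℕ) = (P : ℕ)
    · have hv : (σ i : ℕ) = (σ P : ℕ) := by rw [Fin.ext hc]
      omega
    · omega
  have e2 : Finset.univ.filter (fun i : Fin n => (σ i : ℕ) < (P : ℕ) ∧ (P : ℕ) < (i : ℕ)) =
      Finset.univ.filter (fun i : Fin n => (P : ℕ) < (i : ℕ) ∧ (σ i : ℕ) < (P : ℕ)) := by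
    ext i
    simp only [Finset.mem_filter, Finset.mem_univ, true_and]
    omega
  rw [e1] at h2
  rw [e2] at h3
  omega

private lemma cros_split (f : Fin n → Fin n) : cros f = ecr f + ucr f + lcr f := by
  unfold cros ecr ucr
  have h := Finset.card_filter_add_card_filter_not
    (s := Finset.univ.filter (fun p : Fin n × Fin n =>
      pv p.1 < pv p.2 ∧ pv p.2 ≤ valAt f (pv p.1) ∧ valAt f (pv p.1) < valAt f (pv p.2)))
    (p := fun p : Fin n × Fin n => valAt f (pv p.2) = n)
  simp only [Finset.filter_filter] at h
  have e1 : Finset.univ.filter (fun p : Fin n × Fin n =>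
      (pv p.1 < pv p.2 ∧ pv p.2 ≤ valAt f (pv p.1) ∧ valAt f (pv p.1) < valAt f (pv p.2)) ∧
        valAt f (pv p.2) = n) =
      Finset.univ.filter (fun p : Fin n × Fin n =>
      pv p.1 < pv p.2 ∧ pv p.2 ≤ valAt f (pv p.1) ∧
      valAt f (pv p.1) < valAt f (pv p.2) ∧ valAt f (pv p.2) = n) := by
    ext p
    simp only [Finset.mem_filter, Finset.mem_univ, true_and]
    omega
  have e2 : Finset.univ.filter (fun p : Fin n × Fin n =>
      (pv p.1 < pv p.2 ∧ pv p.2 ≤ valAt f (pv p.1) ∧ valAt f (pv p.1) < valAt f (pv p.2)) ∧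
        ¬ valAt f (pv p.2) = n) =
      Finset.univ.filter (fun p : Fin n × Fin n =>
      pv p.1 < pv p.2 ∧ pv p.2 ≤ valAt f (pv p.1) ∧
      valAt f (pv p.1) < valAt f (pv p.2) ∧ valAt f (pv p.2) < n) := by
    ext p
    simp only [Finset.mem_filter, Finset.mem_univ, true_and]
    have := valAt_le f (pv p.2)
    omega
  rw [e1, e2] at h
  omega

private lemma nest_split (f : Fin n → Fin n) : nest f = ene f + une f + lne f := by
  unfold nest ene une
  have h := Finset.card_filter_add_card_filter_not
    (s := Finset.univ.filter (fun p : Fin n × Fin n =>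
      pv p.1 < pv p.2 ∧ pv p.2 ≤ valAt f (pv p.2) ∧ valAt f (pv p.2) < valAt f (pv p.1)))
    (p := fun p : Fin n × Fin n => valAt f (pv p.1) = n)
  simp only [Finset.filter_filter] at h
  have e1 : Finset.univ.filter (fun p : Fin n × Fin n =>
      (pv p.1 < pv p.2 ∧ pv p.2 ≤ valAt f (pv p.2) ∧ valAt f (pv p.2) < valAt f (pv p.1)) ∧
        valAt f (pv p.1) = n) =
      Finset.univ.filter (fun p : Fin n × Fin n =>
      pv p.1 < pv p.2 ∧ pv p.2 ≤ valAt f (pv p.2) ∧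
      valAt f (pv p.2) < valAt f (pv p.1) ∧ valAt f (pv p.1) = n) := by
    ext p
    simp only [Finset.mem_filter, Finset.mem_univ, true_and]
    omega
  have e2 : Finset.univ.filter (fun p : Fin n × Fin n =>
      (pv p.1 < pv p.2 ∧ pv p.2 ≤ valAt f (pv p.2) ∧ valAt f (pv p.2) < valAt f (pv p.1)) ∧
        ¬ valAt f (pv p.1) = n) =
      Finset.univ.filter (fun p : Fin n × Fin n =>
      pv p.1 < pv p.2 ∧ pv p.2 ≤ valAt f (pv p.2) ∧
      valAt f (pv p.2) < valAt f (pv p.1) ∧ valAt f (pv p.1) < n) := by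
    ext p
    simp only [Finset.mem_filter, Finset.mem_univ, true_and]
    have := valAt_le f (pv p.1)
    omega
  rw [e1, e2] at h
  omega

end Paper

namespace Paper

/-- cros(σ) = cros(θ̂(σ)) and nest(σ) = ñest(θ̂(σ)),
where ñest = ẽne + une + lne. -/
theorem cros_nest_hatTheta (n : ℕ) (σ : Equiv.Perm (Fin n)) :
    cros ⇑σ = cros (hatTheta ⇑σ) ∧
    nest ⇑σ = etne (hatTheta ⇑σ) + une (hatTheta ⇑σ) + lne (hatTheta ⇑σ) := by
  cases n with
  | zero =>
    constructor <;> simp [cros, nest, lcr, lne, etne, une]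
  | succ m =>
    have hecr : ecr ⇑σ = ecr (hatTheta ⇑σ) := by
      set P : Fin (m + 1) := σ.symm ⟨m, Nat.lt_succ_self m⟩ with hPdef
      have hP : (σ P : ℕ) + 1 = m + 1 := by
        rw [hPdef, Equiv.apply_symm_apply]
      rw [ecr_count ⇑σ σ.injective P hP, ecr_hatTheta ⇑σ σ.injective P hP]
      exact count_flip σ P hP
    constructor
    · rw [cros_split, cros_split, hecr, ucr_lcr ⇑σ, lcr_ucr ⇑σ]
      omega
    · rw [nest_split, ene_etne ⇑σ, une_lne ⇑σ, lne_une ⇑σ]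
      omega

end Paper
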